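/- The sequence g_n = |Av_n(132, 123*)| satisfies the recurrence g_n + g_{n-1} - g_{n-2} = Σ_{i=0}^{n-1} g_i g_{n-1-i} for n ≥ 2, with g_0 = 1 and g_1 = 1. -/

import Mathlib

/-- `isoOrd p q` : `q` is order-isomorphic to `p`. -/
def isoOrd (p q : List ℕ) : Bool :=
  (p.length == q.length) &&
    (List.range p.length).all fun i =>
      (List.range p.length).all fun j =>
        decide ((p.getD i 0 < p.getD j 0) ↔ (q.getD i 0 < q.getD j 0))

/-- `containsPat p w` : the word `w` contains an occurrence of the classical pattern `p`. -/
def containsPat (p w : List ℕ) : Bool :=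
  (w.sublistsLen p.length).any (isoOrd p)

/-- Pop phase of the right-greedy `T`-avoiding stack: with next input `a`,
pop entries from the top of the stack while pushing `a` would create a pattern of `T`
(read from top to bottom).  Returns the remaining stack and the popped entries in output order. -/
def popPhase (T : List (List ℕ)) (a : ℕ) : List ℕ → List ℕ × List ℕ
  | [] => ([], [])
  | b :: s =>
    if T.any (fun p => containsPat p (a :: b :: s)) then
      let r := popPhase T a s
      (r.1, b :: r.2)
    else (b :: s, [])

/-- Main loop of the right-greedy `T`-avoiding stack map. -/
def stkAux (T : List (List ℕ)) : List ℕ → List ℕ → List ℕ → List ℕ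
  | [], stack, out => out ++ stack
  | a :: rest, stack, out =>
    let r := popPhase T a stack
    stkAux T rest (a :: r.1) (out ++ r.2)

/-- The generalized stack-sorting map `s_T` : the input is pushed right-greedily through a
stack which must avoid (read from top to bottom) every pattern in `T`. -/
def sT (T : List (List ℕ)) (x : List ℕ) : List ℕ := stkAux T x [] []

/-- West's stack-sorting map: the stack must be increasing from top to bottom,
i.e. must avoid `21` read from top to bottom. -/
def westSort (x : List ℕ) : List ℕ := sT [[2,1]] x

/-- `x` is a permutation of `{1,…,n}`, written as a list. -/
def IsPermList (n : ℕ) (x : List ℕ) : Prop := x.Perm (List.range' 1 n)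

/-- The identity permutation `1 2 … n`. -/
def idPerm (n : ℕ) : List ℕ := List.range' 1 n

/-- `x` contains the bivincular pattern `132*` : positions `i < j` (0-based) with
`x i < x (j+1)` and `x j = x (j+1) + 1`. -/
def Has132Star (x : List ℕ) : Prop :=
  ∃ i j, i < j ∧ j + 1 < x.length ∧ x.getD i 0 < x.getD (j+1) 0 ∧
    x.getD j 0 = x.getD (j+1) 0 + 1

/-- `x` contains the bivincular pattern `123*` : positions `i < j` (0-based) with
`x i < x j` and `x (j+1) = x j + 1`. -/
def Has123Star (x : List ℕ) : Prop :=
  ∃ i j, i < j ∧ j + 1 < x.length ∧ x.getD i 0 < x.getD j 0 ∧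
    x.getD (j+1) 0 = x.getD j 0 + 1

/-- Boolean version of `Has132Star`. -/
def has132star (x : List ℕ) : Bool :=
  (List.range x.length).any fun j =>
    decide (j + 1 < x.length) && (x.getD j 0 == x.getD (j+1) 0 + 1) &&
      (List.range j).any fun i => decide (x.getD i 0 < x.getD (j+1) 0)

/-- Boolean version of `Has123Star`. -/
def has123star (x : List ℕ) : Bool :=
  (List.range x.length).any fun j =>
    decide (j + 1 < x.length) && (x.getD (j+1) 0 == x.getD j 0 + 1) &&
      (List.range j).any fun i => decide (x.getD i 0 < x.getD j 0)

/-- `g n = |Av_n(132, 123*)|`. -/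
def gCount (n : ℕ) : ℕ :=
  ((List.range' 1 n).permutations.filter fun x =>
    !containsPat [1,3,2] x && !has123star x).length


/-!
In a 132-avoiding permutation `x` of `[1, n]` every entry to the left of `n` exceeds every entry
to its right, so `x = (L + m) n R` with `L ∈ Av_k`, `R ∈ Av_m` and `k + m + 1 = n`. Such an `x`
avoids `123*` exactly when `L` and `R` do and `L` does not end in its maximum `k` after some
other entry (then `k + m, n` would complete a `123*`). Hence `g_n = Σ_k b_k g_{n-1-k}`, where
`b_k = |prefixAv k| = g_k - e_k` and `e_k = |endsInMaxAv k|` counts the permutations in `Av_k`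
that end in their maximum after some other entry. These are the case `m = 0` of the
decomposition, so `e_{k+2} = b_{k+1}`, while `e_0 = e_1 = 0`; therefore
`Σ_k e_k g_{n-1-k} = g_{n-1} - g_{n-2}`, which is the recurrence.
-/

def Contains132 (w : List ℕ) : Prop := ∃ a b c : ℕ, [a, b, c].Sublist w ∧ a < c ∧ c < b

lemma isoOrd_132_iff (q : List ℕ) :
    isoOrd [1, 3, 2] q = true ↔ ∃ a b c : ℕ, q = [a, b, c] ∧ a < c ∧ c < b := by
  simp only [isoOrd, Bool.and_eq_true, beq_iff_eq, List.all_eq_true, List.mem_range,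
    decide_eq_true_eq]
  constructor
  · rintro ⟨hlen, h⟩
    match q, hlen.symm with
    | [a, b, c], _ =>
      exact ⟨a, b, c, rfl, by simpa using (h 0 (by simp) 2 (by simp)).1 (by simp),
        by simpa using (h 2 (by simp) 1 (by simp)).1 (by simp)⟩
  · rintro ⟨a, b, c, rfl, hac, hcb⟩
    refine ⟨rfl, fun i hi j hj => ?_⟩
    simp only [List.length_cons, List.length_nil] at hi hj
    interval_cases i <;> interval_cases j <;> simp <;> omega

lemma containsPat_132_iff (w : List ℕ) : containsPat [1, 3, 2] w = true ↔ Contains132 w := by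
  simp only [containsPat, List.any_eq_true, List.mem_sublistsLen, isoOrd_132_iff]
  constructor
  · rintro ⟨_, ⟨hs, -⟩, a, b, c, rfl, hac, hcb⟩
    exact ⟨a, b, c, hs, hac, hcb⟩
  · rintro ⟨a, b, c, hs, hac, hcb⟩
    exact ⟨[a, b, c], ⟨hs, rfl⟩, a, b, c, rfl, hac, hcb⟩

lemma has123star_iff (x : List ℕ) : has123star x = true ↔ Has123Star x := by
  simp only [has123star, List.any_eq_true, List.mem_range, Bool.and_eq_true,
    decide_eq_true_eq, beq_iff_eq, Has123Star]
  constructor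
  · rintro ⟨j, -, ⟨hj, hsucc⟩, i, hij, hlt⟩
    exact ⟨i, j, hij, hj, hlt, hsucc⟩
  · rintro ⟨i, j, hij, hj, hlt, hsucc⟩
    exact ⟨j, by omega, ⟨hj, hsucc⟩, i, hij, hlt⟩

def Av (n : ℕ) : Finset (List ℕ) :=
  ((List.range' 1 n).permutations.filter fun x =>
    !containsPat [1,3,2] x && !has123star x).toFinset

lemma gCount_eq_card_Av (n : ℕ) : gCount n = (Av n).card :=
  (List.toFinset_card_of_nodup
    ((List.nodup_permutations _ List.nodup_range').filter _)).symm

lemma mem_Av {n : ℕ} {x : List ℕ} :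
    x ∈ Av n ↔ x.Perm (List.range' 1 n) ∧ ¬Contains132 x ∧ ¬Has123Star x := by
  simp [Av, ← containsPat_132_iff, ← has123star_iff]

lemma has123Star_iff_exists_append {x : List ℕ} :
    Has123Star x ↔ ∃ u a v, x = u ++ a :: (a + 1) :: v ∧ ∃ c ∈ u, c < a := by
  constructor
  · rintro ⟨i, j, hij, hj, hlt, hsucc⟩
    rw [List.getD_eq_getElem _ _ (by omega), List.getD_eq_getElem _ _ (by omega)] at hlt
    rw [List.getD_eq_getElem _ _ hj, List.getD_eq_getElem _ _ (by omega)] at hsucc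
    refine ⟨x.take j, x[j], x.drop (j + 2), ?_, x[i], ?_, hlt⟩
    · rw [← hsucc, ← List.drop_eq_getElem_cons, ← List.drop_eq_getElem_cons,
        List.take_append_drop]
    · exact List.mem_take_iff_getElem.2 ⟨i, by simp; omega, rfl⟩
  · rintro ⟨u, a, v, rfl, c, hc, hca⟩
    obtain ⟨i, hi, rfl⟩ := List.getElem_of_mem hc
    refine ⟨i, u.length, hi, by simp, ?_, ?_⟩
    · rw [List.getD_eq_getElem _ _ (by simp; omega), List.getD_eq_getElem _ _ (by simp),
        List.getElem_append_left hi]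
      simpa using hca
    · rw [List.getD_eq_getElem _ _ (by simp), List.getD_eq_getElem _ _ (by simp)]
      simp

lemma List.triple_sublist_append {α : Type*} {a b c : α} {l₁ l₂ : List α}
    (h : [a, b, c].Sublist (l₁ ++ l₂)) :
    [a, b, c].Sublist l₁ ∨ [a, b, c].Sublist l₂ ∨ a ∈ l₁ ∧ c ∈ l₂ := by
  obtain ⟨u, v, huv, hu, hv⟩ := List.sublist_append_iff.1 h
  rcases u with _ | ⟨x, _ | ⟨y, _ | ⟨z, _ | ⟨w, u⟩⟩⟩⟩ <;>
    simp only [List.cons_append, List.nil_append, List.cons.injEq, reduceCtorEq,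
      and_false] at huv
  · exact Or.inr (Or.inl (huv ▸ hv))
  · obtain ⟨rfl, rfl⟩ := huv
    exact Or.inr (Or.inr ⟨hu.subset (by simp), hv.subset (by simp)⟩)
  · obtain ⟨rfl, rfl, rfl⟩ := huv
    exact Or.inr (Or.inr ⟨hu.subset (by simp), hv.subset (by simp)⟩)
  · obtain ⟨rfl, rfl, rfl, rfl⟩ := huv
    exact Or.inl (by simpa using hu)

lemma contains132_append_cons_iff {l r : List ℕ} {n : ℕ} (hl : ∀ a ∈ l, a < n)
    (hr : ∀ b ∈ r, b < n) (hlr : ∀ a ∈ l, ∀ b ∈ r, b < a) :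
    Contains132 (l ++ n :: r) ↔ Contains132 l ∨ Contains132 r := by
  constructor
  · rintro ⟨a, b, c, hs, hac, hcb⟩
    have hbn : b ≤ n := by
      have hb : b ∈ l ++ n :: r := hs.subset (by simp)
      simp only [List.mem_append, List.mem_cons] at hb
      rcases hb with hb | rfl | hb
      exacts [(hl b hb).le, le_rfl, (hr b hb).le]
    rcases List.triple_sublist_append hs with hs | hs | ⟨ha, hc⟩
    · exact Or.inl ⟨a, b, c, hs, hac, hcb⟩
    · rcases List.sublist_cons_iff.1 hs with hs | ⟨t, ht, -⟩
      · exact Or.inr ⟨a, b, c, hs, hac, hcb⟩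
      · obtain ⟨rfl, -⟩ := List.cons.inj ht
        omega
    · rcases List.mem_cons.1 hc with rfl | hc
      · omega
      · exact absurd (hlr a ha c hc) (by omega)
  · rintro (⟨a, b, c, hs, hac, hcb⟩ | ⟨a, b, c, hs, hac, hcb⟩)
    · exact ⟨a, b, c, hs.trans (List.sublist_append_left _ _), hac, hcb⟩
    · exact ⟨a, b, c, hs.trans ((List.sublist_cons_self _ _).trans
        (List.sublist_append_right _ _)), hac, hcb⟩

lemma contains132_map_add_iff {m : ℕ} {w : List ℕ} :
    Contains132 (w.map (· + m)) ↔ Contains132 w := by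
  constructor
  · rintro ⟨a, b, c, hs, hac, hcb⟩
    obtain ⟨t, ht, heq⟩ := List.sublist_map_iff.1 hs
    match t, heq with
    | [a', b', c'], heq =>
      simp only [List.map_cons, List.map_nil, List.cons.injEq] at heq
      obtain ⟨rfl, rfl, rfl, -⟩ := heq
      exact ⟨a', b', c', ht, by omega, by omega⟩
  · rintro ⟨a, b, c, hs, hac, hcb⟩
    exact ⟨a + m, b + m, c + m, by simpa using hs.map (· + m), by omega, by omega⟩

lemma lt_of_not_contains132 {l r : List ℕ} {n : ℕ} (h : ¬Contains132 (l ++ n :: r))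
    (hr : ∀ b ∈ r, b < n) {a b : ℕ} (ha : a ∈ l) (hb : b ∈ r) (hab : a ≠ b) :
    b < a := by
  by_contra hba
  exact h ⟨a, n, b, (List.singleton_sublist.2 ha).append
    ((List.singleton_sublist.2 hb).cons_cons n), by omega, hr b hb⟩

def Creates123Star (l : List ℕ) (n : ℕ) : Prop :=
  ∃ u a, l = u ++ [a] ∧ n = a + 1 ∧ ∃ c ∈ u, c < a

lemma has123Star_append_cons_iff {l r : List ℕ} {n : ℕ} (hr : ∀ b ∈ r, b < n)
    (hlr : ∀ a ∈ l, ∀ b ∈ r, b < a) :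
    Has123Star (l ++ n :: r) ↔ Has123Star l ∨ Has123Star r ∨ Creates123Star l n := by
  simp only [has123Star_iff_exists_append, Creates123Star]
  constructor
  · rintro ⟨u, a, v, huv, c, hc, hca⟩
    rcases List.append_eq_append_iff.1 huv with ⟨w, rfl, hw⟩ | ⟨w, rfl, hw⟩
    · rcases w with _ | ⟨b, w⟩ <;>
        simp only [List.nil_append, List.cons_append, List.cons.injEq] at hw
      · obtain ⟨rfl, rfl⟩ := hw
        exact absurd (hr _ List.mem_cons_self) (by omega)
      · obtain ⟨rfl, rfl⟩ := hw
        have ha : a ∈ w ++ a :: (a + 1) :: v := by simp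
        simp only [List.mem_append, List.mem_cons] at hc
        rcases hc with hc | rfl | hc
        · exact absurd (hlr c hc a ha) (by omega)
        · exact absurd (hr a ha) (by omega)
        · exact Or.inr (Or.inl ⟨w, a, v, rfl, c, hc, hca⟩)
    · rcases w with _ | ⟨b, _ | ⟨b', w⟩⟩ <;>
        simp only [List.nil_append, List.cons_append, List.cons.injEq] at hw
      · obtain ⟨rfl, rfl⟩ := hw
        exact absurd (hr _ List.mem_cons_self) (by omega)
      · obtain ⟨rfl, rfl, -⟩ := hw
        exact Or.inr (Or.inr ⟨u, a, rfl, rfl, c, hc, hca⟩)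
      · obtain ⟨rfl, rfl, rfl⟩ := hw
        exact Or.inl ⟨u, a, w, by simp, c, hc, hca⟩
  · rintro (⟨u, a, v, rfl, c, hc, hca⟩ | ⟨u, a, v, rfl, c, hc, hca⟩ |
      ⟨u, a, rfl, rfl, c, hc, hca⟩)
    · exact ⟨u, a, v ++ n :: r, by simp, c, hc, hca⟩
    · exact ⟨l ++ n :: u, a, v, by simp, c, by simp [hc], hca⟩
    · exact ⟨u, a, r, by simp, c, hc, hca⟩

lemma has123Star_map_add_iff {m : ℕ} {w : List ℕ} :
    Has123Star (w.map (· + m)) ↔ Has123Star w := by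
  simp only [has123Star_iff_exists_append]
  constructor
  · rintro ⟨u, a, v, huv, c, hc, hca⟩
    obtain ⟨u', t, rfl, rfl, ht⟩ := List.map_eq_append_iff.1 huv
    obtain ⟨a', t, rfl, rfl, ht⟩ := List.map_eq_cons_iff.1 ht
    obtain ⟨b', v', rfl, hb, rfl⟩ := List.map_eq_cons_iff.1 ht
    obtain ⟨c', hc', rfl⟩ := List.mem_map.1 hc
    exact ⟨u', a', v', by rw [show b' = a' + 1 by omega], c', hc', by omega⟩
  · rintro ⟨u, a, v, rfl, c, hc, hca⟩
    exact ⟨u.map (· + m), a + m, v.map (· + m), by simp [Nat.add_right_comm],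
      c + m, List.mem_map_of_mem hc, by omega⟩

lemma creates123Star_map_add_iff {m n : ℕ} {w : List ℕ} :
    Creates123Star (w.map (· + m)) (n + m) ↔ Creates123Star w n := by
  constructor
  · rintro ⟨u, a, hw, hn, c, hc, hca⟩
    obtain ⟨u', t, rfl, rfl, ht⟩ := List.map_eq_append_iff.1 hw
    obtain ⟨a', t', rfl, rfl, ht'⟩ := List.map_eq_cons_iff.1 ht
    obtain rfl := List.map_eq_nil_iff.1 ht'
    obtain ⟨c', hc', rfl⟩ := List.mem_map.1 hc
    exact ⟨u', a', rfl, by omega, c', hc', by omega⟩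
  · rintro ⟨u, a, rfl, rfl, c, hc, hca⟩
    exact ⟨u.map (· + m), a + m, by simp, by omega, c + m, List.mem_map_of_mem hc, by omega⟩

lemma List.range'_one_add (k m : ℕ) :
    List.range' 1 (k + m) = List.range' 1 m ++ List.range' (m + 1) k := by
  rw [Nat.add_comm k m, Nat.add_comm m 1, List.range'_append_1]

lemma List.range'_one_succ_perm (j : ℕ) :
    (List.range' 1 (j + 1)).Perm ((j + 1) :: List.range' 1 j) := by
  rw [List.range'_1_concat, Nat.add_comm 1 j]
  exact List.perm_append_singleton _ _

lemma List.map_add_range'_one (k m : ℕ) :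
    (List.range' 1 k).map (· + m) = List.range' (m + 1) k := by
  simpa [Nat.add_comm] using List.map_add_range' (a := m) 1 k 1

lemma List.idxOf_append_cons_of_notMem {α : Type*} [BEq α] [LawfulBEq α]
    {l r : List α} {a : α} (h : a ∉ l) : (l ++ a :: r).idxOf a = l.length := by
  rw [List.idxOf_append_of_notMem h, List.idxOf_cons_self, add_zero]

lemma perm_range'_of_append_perm {l r : List ℕ} {k m : ℕ}
    (h : (l ++ r).Perm (List.range' 1 (k + m))) (hl : l.length = k)
    (hlr : ∀ a ∈ l, ∀ b ∈ r, b < a) :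
    l.Perm (List.range' (m + 1) k) ∧ r.Perm (List.range' 1 m) := by
  obtain ⟨hlnd, hrnd, -⟩ := List.nodup_append.1 (h.nodup_iff.2 List.nodup_range')
  have hbounds : ∀ x ∈ l ++ r, 1 ≤ x ∧ x ≤ k + m := fun x hx => by
    have := List.mem_range'_1.1 (h.subset hx)
    omega
  have hrlen : r.length = m := by
    have := h.length_eq
    simp only [List.length_append, List.length_range'] at this
    omega
  -- `r` is an `m`-element subset of `[1, a)` for each letter `a` of `l`
  have hl' : l.Perm (List.range' (m + 1) k) := by
    refine (hlnd.subperm fun a ha => ?_).perm_of_length_le (by simp [hl])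
    have hsub : r.toFinset ⊆ Finset.Ico 1 a := fun b hb => by
      rw [List.mem_toFinset] at hb
      exact Finset.mem_Ico.2 ⟨(hbounds b (by simp [hb])).1, hlr a ha b hb⟩
    have hcard := Finset.card_le_card hsub
    rw [List.toFinset_card_of_nodup hrnd, hrlen, Nat.card_Ico] at hcard
    have := hbounds a (by simp [ha])
    exact List.mem_range'_1.2 ⟨by omega, by omega⟩
  refine ⟨hl', (List.perm_append_left_iff l).1 (h.trans ?_)⟩
  rw [List.range'_one_add]
  exact List.perm_append_comm.trans (hl'.symm.append_right _)

open scoped Classical in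
noncomputable def prefixAv (k : ℕ) : Finset (List ℕ) :=
  (Av k).filter fun L => ¬Creates123Star L (k + 1)

lemma mem_prefixAv {k : ℕ} {L : List ℕ} :
    L ∈ prefixAv k ↔ L ∈ Av k ∧ ¬Creates123Star L (k + 1) := by
  classical exact Finset.mem_filter

open scoped Classical in
noncomputable def endsInMaxAv (k : ℕ) : Finset (List ℕ) :=
  (Av k).filter fun L => Creates123Star L (k + 1)

lemma perm_map_add_append_cons {k m : ℕ} {L R : List ℕ} (hL : L.Perm (List.range' 1 k))
    (hR : R.Perm (List.range' 1 m)) :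
    (L.map (· + m) ++ (k + m + 1) :: R).Perm (List.range' 1 (k + m + 1)) := by
  have hLm : (L.map (· + m)).Perm (List.range' (m + 1) k) :=
    List.map_add_range'_one k m ▸ hL.map _
  refine List.perm_middle.trans (List.Perm.trans ?_ (List.range'_one_succ_perm _).symm)
  rw [List.perm_cons, List.range'_one_add]
  exact List.perm_append_comm.trans (hR.append hLm)

lemma map_add_append_cons_mem_Av_iff {k m : ℕ} {L R : List ℕ}
    (hL : L.Perm (List.range' 1 k)) (hR : R.Perm (List.range' 1 m)) :
    L.map (· + m) ++ (k + m + 1) :: R ∈ Av (k + m + 1) ↔ L ∈ prefixAv k ∧ R ∈ Av m := by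
  have hLm : ∀ a ∈ L.map (· + m), m + 1 ≤ a ∧ a ≤ k + m := by
    simp only [List.mem_map, forall_exists_index, and_imp, forall_apply_eq_imp_iff₂]
    intro a ha
    have := List.mem_range'_1.1 (hL.subset ha)
    omega
  have hRm : ∀ b ∈ R, 1 ≤ b ∧ b ≤ m := fun b hb => by
    have := List.mem_range'_1.1 (hR.subset hb)
    omega
  have hl : ∀ a ∈ L.map (· + m), a < k + m + 1 := fun a ha => by have := hLm a ha; omega
  have hr : ∀ b ∈ R, b < k + m + 1 := fun b hb => by have := hRm b hb; omega
  have hlr : ∀ a ∈ L.map (· + m), ∀ b ∈ R, b < a := fun a ha b hb => by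
    have := hLm a ha; have := hRm b hb; omega
  have hcreates : Creates123Star (L.map (· + m)) (k + m + 1) ↔ Creates123Star L (k + 1) := by
    rw [show k + m + 1 = k + 1 + m by omega]
    exact creates123Star_map_add_iff
  rw [mem_Av, contains132_append_cons_iff hl hr hlr, has123Star_append_cons_iff hr hlr,
    contains132_map_add_iff, has123Star_map_add_iff, hcreates, mem_prefixAv, mem_Av, mem_Av]
  simp only [perm_map_add_append_cons hL hR, hL, hR, true_and, not_or]
  tauto

lemma exists_eq_map_add_append_cons {k m : ℕ} {x : List ℕ} (hx : x ∈ Av (k + m + 1))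
    (hidx : x.idxOf (k + m + 1) = k) :
    ∃ L R : List ℕ, L.Perm (List.range' 1 k) ∧ R.Perm (List.range' 1 m) ∧
      x = L.map (· + m) ++ (k + m + 1) :: R := by
  obtain ⟨hperm, h132, -⟩ := mem_Av.1 hx
  have hn : k + m + 1 ∈ x := hperm.mem_iff.2 (List.mem_range'_1.2 ⟨by omega, by omega⟩)
  obtain ⟨l, r, rfl⟩ := List.append_of_mem hn
  have hperm' : (l ++ r).Perm (List.range' 1 (k + m)) :=
    (List.perm_cons _).1
      (List.perm_middle.symm.trans (hperm.trans (List.range'_one_succ_perm _)))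
  obtain ⟨hnl, hnd⟩ :=
    List.nodup_cons.1 (List.nodup_middle.1 (hperm.nodup_iff.2 List.nodup_range'))
  have hlen : l.length = k := by
    rwa [List.idxOf_append_cons_of_notMem fun h => hnl (List.mem_append_left _ h)] at hidx
  have hr : ∀ b ∈ r, b < k + m + 1 := fun b hb => by
    have := List.mem_range'_1.1 (hperm'.subset (List.mem_append_right _ hb))
    omega
  have hlr : ∀ a ∈ l, ∀ b ∈ r, b < a := fun a ha b hb =>
    lt_of_not_contains132 h132 hr ha hb ((List.nodup_append.1 hnd).2.2 a ha b hb)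
  obtain ⟨hl, hr⟩ := perm_range'_of_append_perm hperm' hlen hlr
  have hsub : (l.map (· - m)).map (· + m) = l := by
    rw [List.map_map]
    refine (List.map_congr_left fun a ha => ?_).trans (List.map_id l)
    have := List.mem_range'_1.1 (hl.subset ha)
    simp only [Function.comp_apply, id_eq]
    omega
  refine ⟨l.map (· - m), r, ?_, hr, by rw [hsub]⟩
  rw [← List.map_perm_map_iff (add_left_injective m), hsub, List.map_add_range'_one]
  exact hl

lemma card_filter_idxOf_eq (k m : ℕ) :
    ((Av (k + m + 1)).filter (·.idxOf (k + m + 1) = k)).card =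
      (prefixAv k).card * (Av m).card := by
  have hperm : ∀ {L}, L ∈ prefixAv k → L.Perm (List.range' 1 k) := fun hL =>
    (mem_Av.1 (mem_prefixAv.1 hL).1).1
  have himage : (Av (k + m + 1)).filter (·.idxOf (k + m + 1) = k) =
      (prefixAv k ×ˢ Av m).image fun p => p.1.map (· + m) ++ (k + m + 1) :: p.2 := by
    ext x
    simp only [Finset.mem_filter, Finset.mem_image, Finset.mem_product, Prod.exists]
    constructor
    · rintro ⟨hx, hidx⟩
      obtain ⟨L, R, hL, hR, rfl⟩ := exists_eq_map_add_append_cons hx hidx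
      exact ⟨L, R, (map_add_append_cons_mem_Av_iff hL hR).1 hx, rfl⟩
    · rintro ⟨L, R, ⟨hL, hR⟩, rfl⟩
      refine ⟨(map_add_append_cons_mem_Av_iff (hperm hL) (mem_Av.1 hR).1).2 ⟨hL, hR⟩, ?_⟩
      rw [List.idxOf_append_cons_of_notMem, List.length_map, (hperm hL).length_eq,
        List.length_range']
      intro hmem
      obtain ⟨a, ha, hak⟩ := List.mem_map.1 hmem
      have := List.mem_range'_1.1 ((hperm hL).subset ha)
      omega
  rw [himage, Finset.card_image_of_injOn, Finset.card_product]
  rintro ⟨L, R⟩ hLR ⟨L', R'⟩ hLR' heq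
  simp only [Finset.coe_product, Set.mem_prod, Finset.mem_coe] at hLR hLR' heq
  obtain ⟨hmap, hcons⟩ := List.append_inj heq (by
    simp [(hperm hLR.1).length_eq, (hperm hLR'.1).length_eq])
  rw [List.map_inj_right (add_left_injective m)] at hmap
  rw [hmap, (List.cons_inj_right _).1 hcons]

lemma gCount_succ (n : ℕ) :
    (gCount (n + 1) : ℤ) =
      ∑ k ∈ Finset.range (n + 1), ((prefixAv k).card : ℤ) * gCount (n - k) := by
  have hmaps :
      Set.MapsTo (·.idxOf (n + 1)) (Av (n + 1) : Set (List ℕ)) (Finset.range (n + 1)) := by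
    intro x hx
    obtain ⟨hperm, -, -⟩ := mem_Av.1 hx
    have hn : n + 1 ∈ x := hperm.mem_iff.2 (List.mem_range'_1.2 ⟨by omega, by omega⟩)
    simpa [hperm.length_eq] using List.idxOf_lt_length_iff.2 hn
  rw [gCount_eq_card_Av, Finset.card_eq_sum_card_fiberwise hmaps]
  push_cast
  refine Finset.sum_congr rfl fun k hk => ?_
  have hcard := card_filter_idxOf_eq k (n - k)
  rw [show k + (n - k) + 1 = n + 1 by simp at hk; omega] at hcard
  rw [hcard, gCount_eq_card_Av]
  push_cast
  rfl

lemma gCount_zero : gCount 0 = 1 := by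
  rw [gCount, List.range'_zero, List.permutations_nil]
  rfl

lemma gCount_one : gCount 1 = 1 := by
  rw [gCount, show List.range' 1 1 = [1] from rfl, show [1].permutations = [[1]] by
    simp [List.permutations, List.permutationsAux_cons, List.permutationsAux_nil,
      List.permutationsAux2]]
  rfl

lemma card_prefixAv_add_card_endsInMaxAv (k : ℕ) :
    (prefixAv k).card + (endsInMaxAv k).card = gCount k := by
  classical
  rw [gCount_eq_card_Av, add_comm]
  exact Finset.card_filter_add_card_filter_not _

lemma endsInMaxAv_eq_empty {k : ℕ} (hk : k ≤ 1) : endsInMaxAv k = ∅ := by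
  classical
  refine Finset.filter_false_of_mem ?_
  rintro x hx ⟨u, a, rfl, -, c, hc, -⟩
  have hlen := (mem_Av.1 hx).1.length_eq
  have := List.length_pos_of_mem hc
  simp only [List.length_append, List.length_singleton, List.length_range'] at hlen
  omega

lemma creates123Star_iff_idxOf_eq {p : ℕ} {x : List ℕ}
    (hperm : x.Perm (List.range' 1 (p + 2))) :
    Creates123Star x (p + 2 + 1) ↔ x.idxOf (p + 2) = p + 1 := by
  have hnd := hperm.nodup_iff.2 List.nodup_range'
  have hlen := hperm.length_eq
  rw [List.length_range'] at hlen
  constructor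
  · rintro ⟨u, a, rfl, ha, -⟩
    obtain rfl : a = p + 2 := by omega
    have hnu : p + 2 ∉ u := fun h =>
      (List.nodup_append.1 hnd).2.2 _ h _ (List.mem_singleton_self _) rfl
    rw [List.idxOf_append_cons_of_notMem hnu]
    simpa using hlen
  · intro hidx
    have hn : p + 2 ∈ x := hperm.mem_iff.2 (List.mem_range'_1.2 ⟨by omega, by omega⟩)
    obtain ⟨s, t, rfl⟩ := List.append_of_mem hn
    have hns : p + 2 ∉ s := fun h =>
      (List.nodup_cons.1 (List.nodup_middle.1 hnd)).1 (List.mem_append_left _ h)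
    rw [List.idxOf_append_cons_of_notMem hns] at hidx
    obtain rfl : t = [] := by
      simp only [List.length_append, List.length_cons] at hlen
      exact List.eq_nil_of_length_eq_zero (by omega)
    obtain ⟨c, hc⟩ := List.exists_mem_of_length_pos (l := s) (by omega)
    have hcle := List.mem_range'_1.1 (hperm.subset (List.mem_append_left _ hc))
    have hcne : c ≠ p + 2 := fun h => hns (h ▸ hc)
    exact ⟨s, p + 2, rfl, rfl, c, hc, by omega⟩

lemma card_endsInMaxAv_add_two (p : ℕ) :
    (endsInMaxAv (p + 2)).card = (prefixAv (p + 1)).card := by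
  have hfilter : endsInMaxAv (p + 2) =
      (Av (p + 1 + 0 + 1)).filter (·.idxOf (p + 1 + 0 + 1) = p + 1) := by
    classical
    exact Finset.filter_congr fun x hx => creates123Star_iff_idxOf_eq (mem_Av.1 hx).1
  rw [hfilter, card_filter_idxOf_eq (p + 1) 0, ← gCount_eq_card_Av, gCount_zero, mul_one]

lemma sum_card_endsInMaxAv_mul (p : ℕ) :
    ∑ i ∈ Finset.range (p + 2), ((endsInMaxAv i).card : ℤ) * gCount (p + 1 - i) =
      gCount (p + 1) - gCount p := by
  have hb0 : ((prefixAv 0).card : ℤ) = 1 := by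
    have := card_prefixAv_add_card_endsInMaxAv 0
    rw [endsInMaxAv_eq_empty (by omega), gCount_zero] at this
    simpa using this
  rw [Finset.sum_range_succ', Finset.sum_range_succ', endsInMaxAv_eq_empty (k := 0) (by omega),
    endsInMaxAv_eq_empty (k := 0 + 1) le_rfl, gCount_succ, Finset.sum_range_succ', hb0]
  simp only [card_endsInMaxAv_add_two, Finset.card_empty, Nat.cast_zero, zero_mul, add_zero,
    one_mul, Nat.sub_zero, add_sub_cancel_right]
  refine Finset.sum_congr rfl fun i _ => ?_
  rw [show p + 1 - (i + 1 + 1) = p - (i + 1) by omega]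

/-- `g 0 = g 1 = 1` and, for `n ≥ 2`,
`g n + g (n-1) - g (n-2) = Σ_{i=0}^{n-1} g i * g (n-1-i)`. -/
theorem g_recurrence :
    gCount 0 = 1 ∧ gCount 1 = 1 ∧ ∀ n, 2 ≤ n →
      (gCount n : ℤ) + gCount (n-1) - gCount (n-2) =
        ∑ i ∈ Finset.range n, (gCount i : ℤ) * gCount (n-1-i) := by
  refine ⟨gCount_zero, gCount_one, fun n hn => ?_⟩
  obtain ⟨p, rfl⟩ : ∃ p, n = p + 2 := ⟨n - 2, by omega⟩
  calc (gCount (p + 2) : ℤ) + gCount (p + 2 - 1) - gCount (p + 2 - 2)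
      = ∑ i ∈ Finset.range (p + 2), ((prefixAv i).card : ℤ) * gCount (p + 1 - i) +
          ∑ i ∈ Finset.range (p + 2), ((endsInMaxAv i).card : ℤ) * gCount (p + 1 - i) := by
        rw [sum_card_endsInMaxAv_mul, ← gCount_succ (p + 1), show p + 2 - 1 = p + 1 from rfl,
          show p + 2 - 2 = p from rfl]
        ring
    _ = ∑ i ∈ Finset.range (p + 2), (gCount i : ℤ) * gCount (p + 2 - 1 - i) := by
        rw [← Finset.sum_add_distrib]
        refine Finset.sum_congr rfl fun i _ => ?_
        rw [← card_prefixAv_add_card_endsInMaxAv i, show p + 2 - 1 - i = p + 1 - i by omega]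
        push_cast
        ring
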